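/- In two variables, with R_k := rot(P_{k+1}) (vector rot of scalars) and R_k^⊥ its L^2(E)-orthogonal complement in (P_k)^2 for a polygon E, the divergence is a linear isomorphism from R_k^⊥ onto P_{k-1}. -/

import Mathlib

/-!
The divergence lowers the degree by one and `div ∘ rot = 0`. Conversely, a divergence-free field
in `(P_k)²` is `rot q` for an explicit `q ∈ P_{k+1}` built from antiderivatives, so the kernel of
`div` on `(P_k)²` is exactly `R_k`. The `L²(E)` pairing is positive definite on polynomials because
`E` has interior points, hence `R_k ∩ R_k^⊥ = 0` and `div` is injective on `R_k^⊥`. For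
surjectivity, `q ∈ P_{k-1}` is the divergence of `(∫ q dx, 0) ∈ (P_k)²`, and subtracting the
`L²(E)`-projection of this field onto the finite-dimensional space `R_k` keeps its divergence.
-/

open MvPolynomial MeasureTheory

/-- `degLE n p` means `p ∈ P_n`, with the convention `P_n = {0}` for `n < 0`. -/
def degLE (n : ℤ) (p : MvPolynomial (Fin 2) ℝ) : Prop :=
  if 0 ≤ n then p.totalDegree ≤ n.toNat else p = 0

/-- The `L²(E)` inner product against a fixed polynomial vector field `g`,
as a linear functional `v ↦ ∫_E v · g`. -/
noncomputable def ipL (E : Set (Fin 2 → ℝ)) (hEb : Bornology.IsBounded E)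
    (g : Fin 2 → MvPolynomial (Fin 2) ℝ) :
    (Fin 2 → MvPolynomial (Fin 2) ℝ) →ₗ[ℝ] ℝ where
  toFun v := ∫ x in E, ∑ i, eval x (v i) * eval x (g i)
  map_add' v w := by
    have h : ∀ u : Fin 2 → MvPolynomial (Fin 2) ℝ,
        IntegrableOn (fun x => ∑ i, eval x (u i) * eval x (g i)) E volume := by
      intro u
      have hc : Continuous fun x : Fin 2 → ℝ => ∑ i, eval x (u i) * eval x (g i) :=
        continuous_finset_sum _ fun i _ =>
          (MvPolynomial.continuous_eval (u i)).mul (MvPolynomial.continuous_eval (g i))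
      exact ((hc.continuousOn).integrableOn_compact hEb.isCompact_closure).mono_set
        subset_closure
    have heq : (fun x => ∑ i, eval x ((v + w) i) * eval x (g i)) =
        fun x => (∑ i, eval x (v i) * eval x (g i)) + ∑ i, eval x (w i) * eval x (g i) := by
      funext x
      simp [add_mul, Finset.sum_add_distrib]
    show (∫ x in E, ∑ i, eval x ((v + w) i) * eval x (g i)) = _
    rw [heq]
    exact integral_add (h v) (h w)
  map_smul' c v := by
    have heq : (fun x => ∑ i, eval x ((c • v) i) * eval x (g i)) =
        fun x => c • ∑ i, eval x (v i) * eval x (g i) := by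
      funext x
      simp [MvPolynomial.smul_eval, mul_assoc]
      ring
    show (∫ x in E, ∑ i, eval x ((c • v) i) * eval x (g i)) = _
    rw [heq, integral_smul]
    rfl

/-- `(P_k)²`, the vector polynomials of degree at most `k` in two variables. -/
noncomputable def Pvec (k : ℕ) : Submodule ℝ (Fin 2 → MvPolynomial (Fin 2) ℝ) :=
  Submodule.pi Set.univ fun _ => MvPolynomial.restrictTotalDegree (Fin 2) ℝ k

/-- The vector rot of a scalar: `rot q = (∂q/∂y, −∂q/∂x)`. -/
noncomputable def vrot (q : MvPolynomial (Fin 2) ℝ) : Fin 2 → MvPolynomial (Fin 2) ℝ :=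
  ![pderiv 1 q, -pderiv 0 q]

/-- `R_k^⊥`: the `L²(E)`-orthogonal complement of `R_k = rot (P_{k+1})` inside `(P_k)²`. -/
noncomputable def Rperp (E : Set (Fin 2 → ℝ)) (hEb : Bornology.IsBounded E) (k : ℕ) :
    Submodule ℝ (Fin 2 → MvPolynomial (Fin 2) ℝ) :=
  Pvec k ⊓ ⨅ p ∈ {p : MvPolynomial (Fin 2) ℝ | p.totalDegree ≤ k + 1},
    LinearMap.ker (ipL E hEb (vrot p))

/-- The divergence `div (v₁, v₂) = ∂v₁/∂x + ∂v₂/∂y`, as a linear map. -/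
noncomputable def divLM :
    (Fin 2 → MvPolynomial (Fin 2) ℝ) →ₗ[ℝ] MvPolynomial (Fin 2) ℝ :=
  LinearMap.comp (pderiv (0 : Fin 2)).toLinearMap
      (LinearMap.proj (φ := fun _ : Fin 2 => MvPolynomial (Fin 2) ℝ) (R := ℝ) 0) +
    LinearMap.comp (pderiv (1 : Fin 2)).toLinearMap
      (LinearMap.proj (φ := fun _ : Fin 2 => MvPolynomial (Fin 2) ℝ) (R := ℝ) 1)

namespace MvPolynomial

theorem pderiv_pderiv_comm {σ R : Type*} [CommRing R] (i j : σ) (p : MvPolynomial σ R) :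
    pderiv i (pderiv j p) = pderiv j (pderiv i p) := by
  have h : ⁅pderiv i, pderiv j⁆ = (0 : Derivation R (MvPolynomial σ R) (MvPolynomial σ R)) :=
    derivation_ext fun k => by
      rw [Derivation.commutator_apply]
      classical simp [pderiv_X, Pi.single_apply, apply_ite]
  have := congr($h p)
  rw [Derivation.commutator_apply] at this
  simpa [sub_eq_zero] using this

section degree

variable {σ R : Type*} [CommSemiring R]

theorem degree_le_totalDegree {p : MvPolynomial σ R} {s : σ →₀ ℕ} (h : s ∈ p.support) :
    s.degree ≤ p.totalDegree :=
  le_totalDegree h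

theorem totalDegree_monomial_le_degree (s : σ →₀ ℕ) (c : R) :
    (monomial s c).totalDegree ≤ s.degree :=
  totalDegree_monomial_le s c

theorem totalDegree_pderiv_le (i : σ) (p : MvPolynomial σ R) :
    (pderiv i p).totalDegree ≤ p.totalDegree - 1 := by
  conv_lhs => rw [p.as_sum]
  rw [map_sum]
  refine totalDegree_finsetSum_le fun m hm => ?_
  rw [pderiv_monomial]
  rcases Nat.eq_zero_or_pos (m i) with hmi | hmi
  · simp [hmi]
  have hle : Finsupp.single i 1 ≤ m := Finsupp.single_le_iff.mpr hmi
  have hdeg : (m - Finsupp.single i 1).degree + 1 = m.degree := by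
    conv_rhs => rw [← tsub_add_cancel_of_le hle]
    rw [map_add, Finsupp.degree_single]
  have := degree_le_totalDegree hm
  exact (totalDegree_monomial_le_degree _ _).trans (by omega)

end degree

variable {σ K : Type*} [Field K]

noncomputable def antideriv (i : σ) : MvPolynomial σ K →ₗ[K] MvPolynomial σ K :=
  (basisMonomials σ K).constr K fun m => monomial (m + Finsupp.single i 1) ((m i : K) + 1)⁻¹

theorem antideriv_monomial (i : σ) (m : σ →₀ ℕ) (c : K) :
    antideriv i (monomial m c) = monomial (m + Finsupp.single i 1) (c / (m i + 1)) := by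
  have h := (basisMonomials σ K).constr_basis K
    (fun m => monomial (m + Finsupp.single i 1) ((m i : K) + 1)⁻¹) m
  rw [coe_basisMonomials] at h
  conv_lhs => rw [← mul_one c, ← smul_eq_mul, ← smul_monomial, map_smul, antideriv, h]
  rw [smul_monomial, smul_eq_mul, div_eq_mul_inv]

theorem pderiv_antideriv [CharZero K] (i : σ) (p : MvPolynomial σ K) :
    pderiv i (antideriv i p) = p := by
  induction p using MvPolynomial.induction_on' with
  | monomial m c =>
    have : (m i : K) + 1 ≠ 0 := Nat.cast_add_one_ne_zero _
    simp only [antideriv_monomial, pderiv_monomial, add_tsub_cancel_right, Finsupp.coe_add,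
      Pi.add_apply, Finsupp.single_eq_same, Nat.cast_add, Nat.cast_one]
    field_simp
  | add p q hp hq => rw [map_add, map_add, hp, hq]

theorem pderiv_antideriv_of_ne {i j : σ} (hij : i ≠ j) (p : MvPolynomial σ K) :
    pderiv j (antideriv i p) = antideriv i (pderiv j p) := by
  induction p using MvPolynomial.induction_on' with
  | monomial m c =>
    have hexp : m + Finsupp.single i 1 - Finsupp.single j 1 =
        m - Finsupp.single j 1 + Finsupp.single i 1 := by
      ext a
      rcases eq_or_ne a i with rfl | hai <;> rcases eq_or_ne a j with rfl | haj <;>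
        simp_all
    simp only [antideriv_monomial, pderiv_monomial, hexp, Finsupp.coe_add, Finsupp.coe_tsub,
      Pi.add_apply, Pi.sub_apply, Finsupp.single_eq_of_ne hij, Finsupp.single_eq_of_ne hij.symm,
      add_zero, tsub_zero]
    congr 1
    ring
  | add p q hp hq => simp only [map_add, hp, hq]

theorem totalDegree_antideriv_le (i : σ) (p : MvPolynomial σ K) :
    (antideriv i p).totalDegree ≤ p.totalDegree + 1 := by
  conv_lhs => rw [p.as_sum]
  rw [map_sum]
  refine totalDegree_finsetSum_le fun m hm => ?_
  rw [antideriv_monomial]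
  refine (totalDegree_monomial_le_degree _ _).trans ?_
  rw [map_add, Finsupp.degree_single]
  exact Nat.add_le_add_right (degree_le_totalDegree hm) 1

end MvPolynomial

theorem LinearMap.BilinForm.exists_mem_sub_mem_orthogonal {K V : Type*} [Field K]
    [AddCommGroup V] [Module K V] {B : LinearMap.BilinForm K V} {W : Submodule K V}
    [FiniteDimensional K W] (hB : (B.restrict W).Nondegenerate) (v : V) :
    ∃ w ∈ W, v - w ∈ B.orthogonal W := by
  set w := ((B.restrict W).flip.toDual hB.flip).symm ((B.flip v).domRestrict W)
  refine ⟨w, w.2, fun n hn => ?_⟩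
  have hw := apply_toDual_symm_apply (hB := hB.flip) ((B.flip v).domRestrict W) ⟨n, hn⟩
  simp only [flip_apply, restrict_apply, domRestrict_apply] at hw
  rw [map_sub, hw, sub_self]

namespace MvPolynomial

theorem eq_zero_of_isOpen_of_eval_eq_zero {ι : Type*} [Fintype ι] {p : MvPolynomial ι ℝ}
    {U : Set (ι → ℝ)} (hU : IsOpen U) (hne : U.Nonempty) (h : ∀ x ∈ U, eval x p = 0) :
    p = 0 := by
  obtain ⟨x, hx⟩ := hne
  obtain ⟨ε, hε, hball⟩ := Metric.isOpen_iff.mp hU x hx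
  refine funext_set (fun i => Metric.ball (x i) ε) (fun i => ?_) fun y hy => ?_
  · rw [Real.ball_eq_Ioo]
    exact Set.Ioo_infinite (by linarith)
  · rw [map_zero, h y (hball ?_)]
    rwa [ball_pi x hε]

end MvPolynomial

theorem divLM_apply (v : Fin 2 → MvPolynomial (Fin 2) ℝ) :
    divLM v = pderiv 0 (v 0) + pderiv 1 (v 1) := rfl

theorem divLM_vrot (q : MvPolynomial (Fin 2) ℝ) : divLM (vrot q) = 0 := by
  simp only [divLM_apply, vrot, Matrix.cons_val_zero, Matrix.cons_val_one, map_neg]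
  rw [pderiv_pderiv_comm 0 1, add_neg_cancel]

theorem mem_Pvec_iff {k : ℕ} {v : Fin 2 → MvPolynomial (Fin 2) ℝ} :
    v ∈ Pvec k ↔ ∀ i, (v i).totalDegree ≤ k := by
  rw [Pvec, Submodule.mem_pi]
  exact forall_congr' fun i => by
    rw [mem_restrictTotalDegree]
    exact ⟨fun h => h (Set.mem_univ i), fun h _ => h⟩

theorem vrot_mem_Pvec {k : ℕ} {q : MvPolynomial (Fin 2) ℝ} (hq : q.totalDegree ≤ k + 1) :
    vrot q ∈ Pvec k := by
  rw [mem_Pvec_iff]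
  intro i
  fin_cases i
  · exact (totalDegree_pderiv_le 1 q).trans (by omega)
  · change (-pderiv 0 q).totalDegree ≤ k
    rw [totalDegree_neg]
    exact (totalDegree_pderiv_le 0 q).trans (by omega)

theorem degLE_add {n : ℤ} {p q : MvPolynomial (Fin 2) ℝ} (hp : degLE n p) (hq : degLE n q) :
    degLE n (p + q) := by
  unfold degLE at *
  split_ifs at * with hn
  · exact (totalDegree_add p q).trans (max_le hp hq)
  · rw [hp, hq, add_zero]

theorem degLE_pderiv {k : ℕ} {p : MvPolynomial (Fin 2) ℝ} (i : Fin 2)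
    (hp : p.totalDegree ≤ k) : degLE ((k : ℤ) - 1) (pderiv i p) := by
  rcases k with _ | k
  · rw [Nat.le_zero, totalDegree_eq_zero_iff_eq_C] at hp
    rw [hp, pderiv_C]
    simp [degLE]
  · have := totalDegree_pderiv_le i p
    simp only [degLE, Nat.cast_add, Nat.cast_one, add_sub_cancel_right, Nat.cast_nonneg,
      if_true, Int.toNat_natCast]
    omega

theorem totalDegree_antideriv_le_of_degLE {k : ℕ} {q : MvPolynomial (Fin 2) ℝ} (i : Fin 2)
    (hq : degLE ((k : ℤ) - 1) q) : (antideriv i q).totalDegree ≤ k := by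
  rcases k with _ | k
  · simp_all [degLE]
  · have := totalDegree_antideriv_le i q
    simp only [degLE, Nat.cast_add, Nat.cast_one, add_sub_cancel_right, Nat.cast_nonneg,
      if_true, Int.toNat_natCast] at hq
    omega

theorem degLE_divLM {k : ℕ} {v : Fin 2 → MvPolynomial (Fin 2) ℝ} (hv : v ∈ Pvec k) :
    degLE ((k : ℤ) - 1) (divLM v) :=
  degLE_add (degLE_pderiv 0 (mem_Pvec_iff.1 hv 0)) (degLE_pderiv 1 (mem_Pvec_iff.1 hv 1))

/-- `q` is a `y`-primitive of `v₀` plus an `x`-primitive correcting `∂ₓq` to `-v₁`; the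
correction is independent of `y` because `div v = 0`. -/
theorem exists_vrot_eq_of_divLM_eq_zero {k : ℕ} {v : Fin 2 → MvPolynomial (Fin 2) ℝ}
    (hv : v ∈ Pvec k) (hdiv : divLM v = 0) :
    ∃ q : MvPolynomial (Fin 2) ℝ, q.totalDegree ≤ k + 1 ∧ vrot q = v := by
  set c := antideriv 1 (pderiv 1 (v 1)) - v 1
  have hc : c.totalDegree ≤ k :=
    (totalDegree_sub _ _).trans <| max_le
      (totalDegree_antideriv_le_of_degLE 1 (degLE_pderiv 1 (mem_Pvec_iff.1 hv 1)))
      (mem_Pvec_iff.1 hv 1)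
  refine ⟨antideriv 1 (v 0) + antideriv 0 c, ?_, ?_⟩
  · exact (totalDegree_add _ _).trans <| max_le
      ((totalDegree_antideriv_le 1 _).trans (by have := mem_Pvec_iff.1 hv 0; omega))
      ((totalDegree_antideriv_le 0 c).trans (by omega))
  · have hy : pderiv 1 c = 0 := by simp [c, pderiv_antideriv]
    have hx : pderiv 0 (antideriv 1 (v 0)) + c = -v 1 := by
      rw [pderiv_antideriv_of_ne one_ne_zero, ← add_sub_assoc, ← map_add, ← divLM_apply, hdiv,
        map_zero, zero_sub]
    funext i
    fin_cases i
    · simp [vrot, pderiv_antideriv, pderiv_antideriv_of_ne zero_ne_one, hy]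
    · simp only [vrot, map_add, pderiv_antideriv, Fin.mk_one, Matrix.cons_val_one,
        Matrix.cons_val_fin_one]
      linear_combination -hx

noncomputable def vrotₗ : MvPolynomial (Fin 2) ℝ →ₗ[ℝ] Fin 2 → MvPolynomial (Fin 2) ℝ :=
  LinearMap.pi ![(pderiv 1).toLinearMap, -(pderiv 0).toLinearMap]

theorem vrotₗ_apply (q : MvPolynomial (Fin 2) ℝ) : vrotₗ q = vrot q := by
  funext i
  fin_cases i <;> rfl

noncomputable def rotSpace (k : ℕ) : Submodule ℝ (Fin 2 → MvPolynomial (Fin 2) ℝ) :=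
  (restrictTotalDegree (Fin 2) ℝ (k + 1)).map vrotₗ

instance (k : ℕ) : FiniteDimensional ℝ (rotSpace k) := Module.Finite.map _ _

theorem mem_rotSpace_iff {k : ℕ} {v : Fin 2 → MvPolynomial (Fin 2) ℝ} :
    v ∈ rotSpace k ↔ ∃ q : MvPolynomial (Fin 2) ℝ, q.totalDegree ≤ k + 1 ∧ vrot q = v := by
  simp only [rotSpace, Submodule.mem_map, mem_restrictTotalDegree, vrotₗ_apply]

theorem rotSpace_le_Pvec (k : ℕ) : rotSpace k ≤ Pvec k := by
  intro v hv
  obtain ⟨q, hq, rfl⟩ := mem_rotSpace_iff.mp hv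
  exact vrot_mem_Pvec hq

section L2

variable {E : Set (Fin 2 → ℝ)} (hEb : Bornology.IsBounded E)

theorem ipL_comm (g v : Fin 2 → MvPolynomial (Fin 2) ℝ) : ipL E hEb g v = ipL E hEb v g := by
  change (∫ x in E, _) = ∫ x in E, _
  simp only [mul_comm]

theorem eq_zero_of_ipL_self_eq_zero (hEi : (interior E).Nonempty)
    {v : Fin 2 → MvPolynomial (Fin 2) ℝ} (hv : ipL E hEb v v = 0) : v = 0 := by
  set f : (Fin 2 → ℝ) → ℝ := fun x => ∑ i, eval x (v i) * eval x (v i)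
  have hf : Continuous f :=
    continuous_finsetSum _ fun i _ => (continuous_eval (v i)).mul (continuous_eval (v i))
  have hint : IntegrableOn f E :=
    (hf.continuousOn.integrableOn_compact hEb.isCompact_closure).mono_set subset_closure
  have hae : f =ᵐ[volume.restrict E] 0 :=
    (integral_eq_zero_iff_of_nonneg (fun x => Finset.sum_nonneg fun i _ => mul_self_nonneg _)
      hint).mp hv
  have hzero : Set.EqOn f 0 (interior E) :=
    Measure.eqOn_open_of_ae_eq (ae_restrict_of_ae_restrict_of_subset interior_subset hae)
      isOpen_interior hf.continuousOn continuousOn_const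
  funext i
  refine eq_zero_of_isOpen_of_eval_eq_zero isOpen_interior hEi fun x hx => ?_
  exact mul_self_eq_zero.mp <| (Finset.sum_eq_zero_iff_of_nonneg fun j _ => mul_self_nonneg _).mp
    (hzero hx) i (Finset.mem_univ i)

noncomputable def l2Form : LinearMap.BilinForm ℝ (Fin 2 → MvPolynomial (Fin 2) ℝ) :=
  LinearMap.mk₂ ℝ (fun g v => ipL E hEb g v)
    (fun g g' v => by rw [ipL_comm, map_add, ipL_comm hEb v, ipL_comm hEb v])
    (fun c g v => by rw [ipL_comm, map_smul, ipL_comm hEb v])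
    (fun g v v' => map_add _ v v') (fun c g v => map_smul _ c v)

theorem l2Form_apply (g v : Fin 2 → MvPolynomial (Fin 2) ℝ) : l2Form hEb g v = ipL E hEb g v :=
  rfl

theorem l2Form_restrict_nondegenerate (hEi : (interior E).Nonempty)
    (W : Submodule ℝ (Fin 2 → MvPolynomial (Fin 2) ℝ)) : ((l2Form hEb).restrict W).Nondegenerate :=
  ⟨fun w hw => Subtype.ext (eq_zero_of_ipL_self_eq_zero hEb hEi (hw w)),
    fun w hw => Subtype.ext (eq_zero_of_ipL_self_eq_zero hEb hEi (hw w))⟩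

end L2

section Rperp

variable {E : Set (Fin 2 → ℝ)} {hEb : Bornology.IsBounded E} {k : ℕ}

theorem mem_Rperp_iff {v : Fin 2 → MvPolynomial (Fin 2) ℝ} :
    v ∈ Rperp E hEb k ↔ v ∈ Pvec k ∧ v ∈ (l2Form hEb).orthogonal (rotSpace k) := by
  simp only [Rperp, Submodule.mem_inf, Submodule.mem_iInf, LinearMap.mem_ker,
    LinearMap.BilinForm.mem_orthogonal_iff, mem_rotSpace_iff, Set.mem_ofPred_eq,
    forall_exists_index, and_imp, forall_apply_eq_imp_iff₂, l2Form_apply]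

theorem eq_zero_of_mem_Rperp_of_divLM_eq_zero (hEi : (interior E).Nonempty)
    {v : Fin 2 → MvPolynomial (Fin 2) ℝ} (hv : v ∈ Rperp E hEb k) (hdiv : divLM v = 0) :
    v = 0 := by
  obtain ⟨hvP, hvorth⟩ := mem_Rperp_iff.mp hv
  obtain ⟨q, hq, rfl⟩ := exists_vrot_eq_of_divLM_eq_zero hvP hdiv
  exact eq_zero_of_ipL_self_eq_zero hEb hEi (hvorth _ (mem_rotSpace_iff.mpr ⟨q, hq, rfl⟩))

theorem exists_mem_Rperp_divLM_eq (hEi : (interior E).Nonempty)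
    {w : Fin 2 → MvPolynomial (Fin 2) ℝ} (hw : w ∈ Pvec k) :
    ∃ v ∈ Rperp E hEb k, divLM v = divLM w := by
  obtain ⟨r, hr, hwr⟩ := LinearMap.BilinForm.exists_mem_sub_mem_orthogonal
    (l2Form_restrict_nondegenerate hEb hEi (rotSpace k)) w
  refine ⟨w - r, mem_Rperp_iff.mpr ⟨sub_mem hw (rotSpace_le_Pvec k hr), hwr⟩, ?_⟩
  obtain ⟨q, -, rfl⟩ := mem_rotSpace_iff.mp hr
  rw [map_sub, divLM_vrot, sub_zero]

end Rperp

theorem div_iso_on_Rperp_general (k : ℕ) (E : Set (Fin 2 → ℝ))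
    (hEb : Bornology.IsBounded E) (hEi : (interior E).Nonempty) :
    (∀ v ∈ Rperp E hEb k, ∀ w ∈ Rperp E hEb k, divLM v = divLM w → v = w) ∧
    (∀ v ∈ Rperp E hEb k, degLE ((k : ℤ) - 1) (divLM v)) ∧
    (∀ q : MvPolynomial (Fin 2) ℝ, degLE ((k : ℤ) - 1) q →
      ∃ v ∈ Rperp E hEb k, divLM v = q) := by
  refine ⟨fun v hv w hw hvw => ?_, fun v hv => degLE_divLM (mem_Rperp_iff.mp hv).1,
    fun q hq => ?_⟩
  · refine sub_eq_zero.mp (eq_zero_of_mem_Rperp_of_divLM_eq_zero hEi (sub_mem hv hw) ?_)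
    rw [map_sub, hvw, sub_self]
  · have hw : ![antideriv 0 q, 0] ∈ Pvec k := mem_Pvec_iff.mpr fun i => by
      fin_cases i
      · exact totalDegree_antideriv_le_of_degLE 0 hq
      · exact (totalDegree_zero).trans_le (Nat.zero_le k)
    obtain ⟨v, hv, hdiv⟩ := exists_mem_Rperp_divLM_eq hEi hw
    exact ⟨v, hv, hdiv.trans (by simp [divLM_apply, pderiv_antideriv])⟩

/-- For a bounded polygon `E` (with nonempty interior), the divergence restricted to the
`L²(E)`-orthogonal complement `R_k^⊥` of `R_k = rot(P_{k+1})` in `(P_k)²` is a linear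
isomorphism onto `P_{k-1}`. -/
theorem div_iso_on_Rperp (k : ℕ) (E : Set (Fin 2 → ℝ)) (hEm : MeasurableSet E)
    (hEb : Bornology.IsBounded E) (hEi : (interior E).Nonempty) :
    (∀ v ∈ Rperp E hEb k, ∀ w ∈ Rperp E hEb k, divLM v = divLM w → v = w) ∧
    (∀ v ∈ Rperp E hEb k, degLE ((k : ℤ) - 1) (divLM v)) ∧
    (∀ q : MvPolynomial (Fin 2) ℝ, degLE ((k : ℤ) - 1) q →
      ∃ v ∈ Rperp E hEb k, divLM v = q) :=
  div_iso_on_Rperp_general k E hEb hEi
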